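/- Let Ω ⊂ ℝ^d be open and bounded, Γ ⊂ ℝ^s compact, U := Ω × Γ. Let (E, μ) ∈ ℳ(U, ℝ^{d×s} × ℝ) satisfy the first-order continuity equation ∇_x μ + div_z E = 0 in the weak sense, with Radon–Nikodym density e = dE/dμ = (e_1, …, e_s) ∈ L¹_μ(U, ℝ^{d×s}), and assume additionally that ∫_U ⟨∇_x φ, dE⟩ + ∫_U ∑_i ⟨∇_z φ, e_i ⊗ e_i⟩ dμ = 0 for all φ ∈ C_c¹(U, ℝ^s) (the optimality equation for harmonic mappings valued in the Wasserstein space). Then the triple ((∑_i e_i ⊗ e_i)μ, 0, μ) ∈ ℳ(U, ℝ^{s×s} × ℝ^s × ℝ) satisfies the Laplacian continuity equation −Δ_x μ − div_z E + div_z² H = 0 in the weak sense. -/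

import Mathlib

open MeasureTheory Filter Topology Set
open scoped ENNReal NNReal

noncomputable section

abbrev Euc (k : ℕ) := EuclideanSpace ℝ (Fin k)

/-- The `i`-th standard basis vector of `ℝ^k`. -/
def ex (k : ℕ) (i : Fin k) : Euc k := EuclideanSpace.single i 1

/-- `C_c¹`-test functions valued in `ℝ^r`: continuously differentiable, with compact support
in the first variable contained in `Ω`. -/
def TestV (d s r : ℕ) (Ω : Set (Euc d)) : Set ((Euc d × Euc s) → Euc r) :=
  {φ | ContDiff ℝ 1 φ ∧ ∃ K : Set (Euc d), IsCompact K ∧ K ⊆ Ω ∧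
    ∀ x z, x ∉ K → φ (x, z) = 0}

/-- `C_c²` scalar test functions for the Laplacian continuity equation. -/
def TestL (d s : ℕ) (Ω : Set (Euc d)) : Set ((Euc d × Euc s) → ℝ) :=
  {φ | ContDiff ℝ 2 φ ∧ ∃ K : Set (Euc d), IsCompact K ∧ K ⊆ Ω ∧
    ∀ x z, x ∉ K → φ (x, z) = 0}

/-- Differentiating `u ↦ (fderiv ℝ φ u) w` gives the second derivative applied to `w`. -/
lemma fderiv_apply_const {d s : ℕ} (φ : Euc d × Euc s → ℝ) (hφ : ContDiff ℝ 2 φ)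
    (t v w : Euc d × Euc s) :
    fderiv ℝ (fun u => fderiv ℝ φ u w) t v = fderiv ℝ (fderiv ℝ φ) t v w := by
  have hD : Differentiable ℝ (fderiv ℝ φ) :=
    (hφ.fderiv_right (m := 1) (by norm_num)).differentiable one_ne_zero
  have h1 : HasFDerivAt (fderiv ℝ φ) (fderiv ℝ (fderiv ℝ φ) t) t := (hD t).hasFDerivAt
  have h2 := ((ContinuousLinearMap.apply ℝ ℝ w).hasFDerivAt.comp t h1).fderiv
  have h3 : (fun u => fderiv ℝ φ u w) = (ContinuousLinearMap.apply ℝ ℝ w) ∘ (fderiv ℝ φ) := rfl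
  rw [h3, h2]; rfl

/-- Components of the derivative of a Euclidean-space-valued map. -/
lemma fderiv_euclidean_comp {d s r : ℕ} (ψ : Euc d × Euc s → Euc r)
    (hψ : Differentiable ℝ ψ) (t v : Euc d × Euc s) (i : Fin r) :
    (fderiv ℝ ψ t v) i = fderiv ℝ (fun u => ψ u i) t v := by
  have h2 := ((EuclideanSpace.proj (𝕜 := ℝ) i).hasFDerivAt.comp t (hψ t).hasFDerivAt).fderiv
  have h3 : (fun u => ψ u i) = (EuclideanSpace.proj (𝕜 := ℝ) i) ∘ ψ := rfl
  rw [h3, h2]; rfl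

/-- Proposition 23: let `(E, μ) ∈ ℳ(U, ℝ^{d×s} × ℝ)` — with `μ ≥ 0` a
finite measure concentrated on `U = Ω × Γ` and `E = e·μ` with Radon–Nikodym density
`e = dE/dμ ∈ L¹_μ` — satisfy the first-order continuity equation and additionally the
optimality equation for harmonic mappings valued in Wasserstein space,
`∫ ⟨∇_x φ, dE⟩ + ∫ ∑_i ⟨∇_z φ, e_i ⊗ e_i⟩ dμ = 0` for all `φ ∈ C_c¹(U, ℝ^s)`.
Then the triple `((∑_i e_i ⊗ e_i) μ, 0, μ)` satisfies the Laplacian continuity equation. -/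
theorem stmt16 (d s : ℕ) (Ω : Set (Euc d)) (hΩo : IsOpen Ω) (hΩb : Bornology.IsBounded Ω)
    (Γ : Set (Euc s)) (hΓ : IsCompact Γ)
    (μ : Measure (Euc d × Euc s)) [IsFiniteMeasure μ] (hμU : μ (Ω ×ˢ Γ)ᶜ = 0)
    (e : (Euc d × Euc s) → Fin d → Fin s → ℝ) (he : Integrable e μ)
    (hce : ∀ φ ∈ TestV d s d Ω,
      (∫ t, ∑ i : Fin d, (fderiv ℝ φ t (ex d i, 0)) i ∂μ)
        + (∫ t, ∑ i : Fin d, ∑ k : Fin s,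
            (fderiv ℝ φ t ((0 : Euc d), ex s k)) i * e t i k ∂μ) = 0)
    (hharm : ∀ φ ∈ TestV d s s Ω,
      (∫ t, ∑ i : Fin d, ∑ k : Fin s, (fderiv ℝ φ t (ex d i, 0)) k * e t i k ∂μ)
        + (∫ t, ∑ i : Fin d, ∑ k : Fin s, ∑ l : Fin s,
            (fderiv ℝ φ t ((0 : Euc d), ex s l)) k * e t i k * e t i l ∂μ) = 0) :
    ∀ φ ∈ TestL d s Ω,
      -(∫ t, ∑ i : Fin d, (fderiv ℝ (fderiv ℝ φ) t (ex d i, 0)) (ex d i, 0) ∂μ)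
        + (∫ t, ∑ k : Fin s, fderiv ℝ φ t ((0 : Euc d), ex s k) * (0 : ℝ) ∂μ)
        + (∫ t, ∑ k : Fin s, ∑ l : Fin s,
            (fderiv ℝ (fderiv ℝ φ) t ((0 : Euc d), ex s k)) ((0 : Euc d), ex s l)
              * (∑ i : Fin d, e t i k * e t i l) ∂μ)
        = 0 := by
  intro φ hφ
  obtain ⟨hφ2, K, hK, hKΩ, hK0⟩ := hφ
  have hD : Differentiable ℝ (fderiv ℝ φ) :=
    (hφ2.fderiv_right (m := 1) (by norm_num)).differentiable one_ne_zero
  -- the derivative of φ vanishes off K × univ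
  have hfd0 : ∀ x z, x ∉ K → fderiv ℝ φ (x, z) = 0 := by
    intro x z hx
    have hopen : IsOpen (Kᶜ ×ˢ (univ : Set (Euc s))) := (hK.isClosed.isOpen_compl).prod isOpen_univ
    have hmem : (x, z) ∈ Kᶜ ×ˢ (univ : Set (Euc s)) := ⟨hx, mem_univ _⟩
    have hev : φ =ᶠ[𝓝 (x, z)] (fun _ => (0 : ℝ)) := by
      filter_upwards [hopen.mem_nhds hmem] with u hu
      exact hK0 u.1 u.2 hu.1
    rw [hev.fderiv_eq, fderiv_fun_const]
    rfl
  -- symmetry of the second derivative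
  have hsymm : ∀ t v w, fderiv ℝ (fderiv ℝ φ) t v w = fderiv ℝ (fderiv ℝ φ) t w v := by
    intro t v w
    exact second_derivative_symmetric (fun y => (hφ2.differentiable two_ne_zero y).hasFDerivAt)
      (hD t).hasFDerivAt v w
  -- the two test functions
  set ψx : (Euc d × Euc s) → Euc d := fun t => WithLp.toLp 2 (fun i => fderiv ℝ φ t (ex d i, 0)) with hψx_def
  set ψz : (Euc d × Euc s) → Euc s := fun t => WithLp.toLp 2 (fun k => fderiv ℝ φ t (0, ex s k)) with hψz_def
  have hφ1 : ContDiff ℝ 1 (fderiv ℝ φ) := hφ2.fderiv_right (m := 1) (by norm_num)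
  have hψxC : ContDiff ℝ 1 ψx := by
    rw [contDiff_euclidean]
    intro i
    exact hφ1.clm_apply contDiff_const
  have hψzC : ContDiff ℝ 1 ψz := by
    rw [contDiff_euclidean]
    intro k
    exact hφ1.clm_apply contDiff_const
  have hψxT : ψx ∈ TestV d s d Ω := by
    refine ⟨hψxC, K, hK, hKΩ, fun x z hx => ?_⟩
    ext i
    show fderiv ℝ φ (x, z) (ex d i, 0) = 0
    rw [hfd0 x z hx]; rfl
  have hψzT : ψz ∈ TestV d s s Ω := by
    refine ⟨hψzC, K, hK, hKΩ, fun x z hx => ?_⟩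
    ext k
    show fderiv ℝ φ (x, z) (0, ex s k) = 0
    rw [hfd0 x z hx]; rfl
  -- compute the derivative components
  have keyx : ∀ t v (i : Fin d), (fderiv ℝ ψx t v) i = fderiv ℝ (fderiv ℝ φ) t v (ex d i, 0) := by
    intro t v i
    rw [fderiv_euclidean_comp ψx (hψxC.differentiable one_ne_zero) t v i]
    exact fderiv_apply_const φ hφ2 t v (ex d i, 0)
  have keyz : ∀ t v (k : Fin s), (fderiv ℝ ψz t v) k = fderiv ℝ (fderiv ℝ φ) t v (0, ex s k) := by
    intro t v k
    rw [fderiv_euclidean_comp ψz (hψzC.differentiable one_ne_zero) t v k]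
    exact fderiv_apply_const φ hφ2 t v (0, ex s k)
  have Hce := hce ψx hψxT
  have Hharm := hharm ψz hψzT
  -- rewrite Hce
  have e1 : (∫ t, ∑ i : Fin d, (fderiv ℝ ψx t (ex d i, 0)) i ∂μ)
      = ∫ t, ∑ i : Fin d, (fderiv ℝ (fderiv ℝ φ) t (ex d i, 0)) (ex d i, 0) ∂μ := by
    refine integral_congr_ae (ae_of_all _ fun t => ?_)
    exact Finset.sum_congr rfl fun i _ => keyx t _ i
  have e2 : (∫ t, ∑ i : Fin d, ∑ k : Fin s, (fderiv ℝ ψx t ((0 : Euc d), ex s k)) i * e t i k ∂μ)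
      = ∫ t, ∑ i : Fin d, ∑ k : Fin s,
          (fderiv ℝ (fderiv ℝ φ) t (ex d i, 0)) (0, ex s k) * e t i k ∂μ := by
    refine integral_congr_ae (ae_of_all _ fun t => ?_)
    refine Finset.sum_congr rfl fun i _ => Finset.sum_congr rfl fun k _ => ?_
    rw [keyx t _ i, hsymm]
  have e3 : (∫ t, ∑ i : Fin d, ∑ k : Fin s, (fderiv ℝ ψz t (ex d i, 0)) k * e t i k ∂μ)
      = ∫ t, ∑ i : Fin d, ∑ k : Fin s,
          (fderiv ℝ (fderiv ℝ φ) t (ex d i, 0)) (0, ex s k) * e t i k ∂μ := by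
    refine integral_congr_ae (ae_of_all _ fun t => ?_)
    refine Finset.sum_congr rfl fun i _ => Finset.sum_congr rfl fun k _ => ?_
    rw [keyz t _ k]
  have e4 : (∫ t, ∑ i : Fin d, ∑ k : Fin s, ∑ l : Fin s,
        (fderiv ℝ ψz t ((0 : Euc d), ex s l)) k * e t i k * e t i l ∂μ)
      = ∫ t, ∑ k : Fin s, ∑ l : Fin s,
          (fderiv ℝ (fderiv ℝ φ) t ((0 : Euc d), ex s k)) ((0 : Euc d), ex s l)
            * (∑ i : Fin d, e t i k * e t i l) ∂μ := by
    refine integral_congr_ae (ae_of_all _ fun t => ?_)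
    have : ∀ i k l, (fderiv ℝ ψz t ((0 : Euc d), ex s l)) k * e t i k * e t i l
        = (fderiv ℝ (fderiv ℝ φ) t ((0 : Euc d), ex s k)) ((0 : Euc d), ex s l)
            * (e t i k * e t i l) := by
      intro i k l
      rw [keyz t _ k, hsymm, mul_assoc]
    calc ∑ i : Fin d, ∑ k : Fin s, ∑ l : Fin s,
          (fderiv ℝ ψz t ((0 : Euc d), ex s l)) k * e t i k * e t i l
        = ∑ k : Fin s, ∑ l : Fin s, ∑ i : Fin d,
          (fderiv ℝ (fderiv ℝ φ) t ((0 : Euc d), ex s k)) ((0 : Euc d), ex s l)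
            * (e t i k * e t i l) := by
          rw [Finset.sum_comm]
          refine Finset.sum_congr rfl fun k _ => ?_
          rw [Finset.sum_comm]
          exact Finset.sum_congr rfl fun l _ => Finset.sum_congr rfl fun i _ => this i k l
      _ = _ := by
          refine Finset.sum_congr rfl fun k _ => Finset.sum_congr rfl fun l _ => ?_
          rw [← Finset.mul_sum]
  rw [e1, e2] at Hce
  rw [e3, e4] at Hharm
  have hmid : (∫ t, ∑ k : Fin s, fderiv ℝ φ t ((0 : Euc d), ex s k) * (0 : ℝ) ∂μ) = 0 := by
    simp
  rw [hmid]
  linarith [Hce, Hharm]
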